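/- Reparametrization invariance of the signature: Let x : ℝ → ℝ^d be a continuously differentiable path and let φ : ℝ → ℝ be continuously differentiable. Then for every word (i_1, …, i_k) ∈ {1, …, d}^k and all real numbers s', t', the composed path x ∘ φ satisfies S_{(i_1, …, i_k)}(x ∘ φ)_{[s',t']} = S_{(i_1, …, i_k)}(x)_{[φ(s'), φ(t')]}. In particular, if φ(s') = s and φ(t') = t, the coordinate signature of x ∘ φ on [s',t'] equals that of x on [s,t], so the signature disregards the parameterization of the path. -/

import Mathlib

open intervalIntegral Topology Filter

/-- Coordinate signature, recursing on the *reversed* word: the head of the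
list is the last letter `i_k` of the word. -/
noncomputable def sigRev {d : ℕ} (x : ℝ → Fin d → ℝ) (s : ℝ) : List (Fin d) → ℝ → ℝ
  | [], _ => 1
  | i :: w, t => ∫ u in s..t, sigRev x s w u * deriv (fun v => x v i) u

/-- Coordinate signature `S_{(i_1,…,i_k)}(x)_{[s,t]}` of a path `x : ℝ → ℝ^d`,
defined by `S_{()} = 1` and
`S_{(i_1,…,i_k)}(x)_{[s,t]} = ∫_s^t S_{(i_1,…,i_{k-1})}(x)_{[s,u]} · x_{i_k}'(u) du`. -/
noncomputable def sig {d : ℕ} (x : ℝ → Fin d → ℝ) (s t : ℝ) (w : List (Fin d)) : ℝ :=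
  sigRev x s w.reverse t

/-!
Each level of the signature is `∫_s^t S(u) x_i'(u) du` with `S` the previous level. By induction
on the word, the previous level of `x ∘ φ` at `u` is that of `x` at `φ u`, and the chain rule
`(x_i ∘ φ)' = (x_i' ∘ φ) · φ'` turns the integrand into `(S · x_i') ∘ φ · φ'`, so the substitution
`v = φ u` moves the integral from `[s', t']` to `[φ s', φ t']`.
-/

theorem continuous_sigRev {d : ℕ} {x : ℝ → Fin d → ℝ}
    (hx : ∀ i, Continuous (deriv fun v => x v i)) (s : ℝ) (w : List (Fin d)) :
    Continuous (sigRev x s w) := by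
  induction w with
  | nil => exact continuous_const
  | cons i w ih =>
    exact continuous_primitive (fun a b => (ih.mul (hx i)).intervalIntegrable a b) s

theorem sigRev_comp {d : ℕ} {x : ℝ → Fin d → ℝ} (hx : ContDiff ℝ 1 x) {φ : ℝ → ℝ}
    (hφ : ContDiff ℝ 1 φ) (s' : ℝ) (w : List (Fin d)) (t' : ℝ) :
    sigRev (x ∘ φ) s' w t' = sigRev x (φ s') w (φ t') := by
  have hxi (i : Fin d) : ContDiff ℝ 1 fun v => x v i := contDiff_pi.1 hx i
  induction w generalizing t' with
  | nil => rfl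
  | cons i w ih =>
    have chain_rule (u : ℝ) :
        deriv (fun v => x (φ v) i) u = deriv (fun v => x v i) (φ u) * deriv φ u :=
      deriv_comp (h₂ := fun v => x v i) u ((hxi i).differentiable one_ne_zero _)
        (hφ.differentiable one_ne_zero u)
    have substitution :=
      integral_comp_mul_deriv (a := s') (b := t')
        (g := fun v => sigRev x (φ s') w v * deriv (fun v => x v i) v)
        (fun u _ => (hφ.differentiable one_ne_zero u).hasDerivAt)
        (hφ.continuous_deriv le_rfl).continuousOn
        ((continuous_sigRev (fun j => (hxi j).continuous_deriv le_rfl) _ w).mul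
          ((hxi i).continuous_deriv le_rfl))
    simp only [sigRev, ← substitution, ih, chain_rule, Function.comp_apply, mul_assoc]

/-- Reparametrization invariance of the signature:
`S_w(x ∘ φ)_{[s',t']} = S_w(x)_{[φ(s'),φ(t')]}`. -/
theorem sig_reparam {d : ℕ} (x : ℝ → Fin d → ℝ) (hx : ContDiff ℝ 1 x)
    (φ : ℝ → ℝ) (hφ : ContDiff ℝ 1 φ) (w : List (Fin d)) (s' t' : ℝ) :
    sig (x ∘ φ) s' t' w = sig x (φ s') (φ t') w :=
  sigRev_comp hx hφ s' w.reverse t'
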